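/- Let β : ℝᵐ → ℝⁿ and γ : ℝⁿ → ℝᵐ be continuously differentiable, let λ_C ∈ ℝᵐ, and let λ̂_U ∈ ℝⁿ be a target. Define e = λ̂_U - β(λ_C) and the hidden target λ̂_C = λ_C + γ(λ̂_U) - γ(β(λ_C)). Suppose the largest eigenvalue μ of (I - J_β J_γ)ᵀ(I - J_β J_γ) (Jacobians evaluated at the relevant points) satisfies μ < 1. Then there exists δ > 0 such that whenever ‖e‖ < δ, ‖λ̂_U - β(λ̂_C)‖² ≤ ‖λ̂_U - β(λ_C)‖² (i.e., achieving the hidden target does not increase the output error). -/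

import Mathlib

/-!
At `λ̂_U = β λ_C` the hidden target is `λ_C` itself, so the output error
`λ̂_U ↦ λ̂_U - β (λ̂_C)` vanishes there and, by the chain rule, has derivative `I - J_β J_γ`.
The eigenvalue hypothesis bounds the operator norm of this derivative by `√μ < 1`, and the
first-order remainder is eventually below `(1 - √μ) ‖e‖`, so the new error is at most `‖e‖`.
-/

open Topology

def hiddenTarget {E F : Type*} [AddGroup E] (β : E → F) (γ : F → E) (lamC : E) (lamU : F) :
    E :=
  lamC + γ lamU - γ (β lamC)

theorem hiddenTarget_self {E F : Type*} [AddGroup E] (β : E → F) (γ : F → E) (lamC : E) :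
    hiddenTarget β γ lamC (β lamC) = lamC :=
  add_sub_cancel_right lamC _

section

variable {E F : Type*} [NormedAddCommGroup E] [NormedSpace ℝ E]
  [NormedAddCommGroup F] [NormedSpace ℝ F]

theorem ContinuousLinearMap.opNorm_le_sqrt_of_sq_le {T : E →L[ℝ] F} {c : ℝ}
    (h : ∀ v, ‖T v‖ ^ 2 ≤ c * ‖v‖ ^ 2) : ‖T‖ ≤ √c :=
  T.opNorm_le_bound (Real.sqrt_nonneg c) fun v => by
    calc ‖T v‖ = √(‖T v‖ ^ 2) := (Real.sqrt_sq (norm_nonneg _)).symm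
      _ ≤ √(c * ‖v‖ ^ 2) := Real.sqrt_le_sqrt (h v)
      _ = √c * ‖v‖ := by rw [Real.sqrt_mul' c (sq_nonneg _), Real.sqrt_sq (norm_nonneg _)]

theorem HasFDerivAt.eventually_norm_sub_le_mul {f : E → F} {f' : E →L[ℝ] F} {x : E}
    (hf : HasFDerivAt f f' x) {K : ℝ} (hK : ‖f'‖ < K) :
    ∀ᶠ y in 𝓝 x, ‖f y - f x‖ ≤ K * ‖y - x‖ := by
  filter_upwards [hf.isLittleO.def (sub_pos.2 hK)] with y hy
  calc ‖f y - f x‖ = ‖f' (y - x) + (f y - f x - f' (y - x))‖ := by rw [add_sub_cancel]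
    _ ≤ ‖f'‖ * ‖y - x‖ + (K - ‖f'‖) * ‖y - x‖ :=
      norm_add_le_of_le (f'.le_opNorm _) hy
    _ = K * ‖y - x‖ := by ring

theorem hasFDerivAt_sub_comp_hiddenTarget {β : E → F} {γ : F → E} {lamC : E}
    {Jβ : E →L[ℝ] F} {Jγ : F →L[ℝ] E}
    (hβ : HasFDerivAt β Jβ lamC) (hγ : HasFDerivAt γ Jγ (β lamC)) :
    HasFDerivAt (fun lamU => lamU - β (hiddenTarget β γ lamC lamU))
      (ContinuousLinearMap.id ℝ F - Jβ.comp Jγ) (β lamC) := by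
  have hT : HasFDerivAt (hiddenTarget β γ lamC) Jγ (β lamC) :=
    (hγ.const_add lamC).sub_const (γ (β lamC))
  rw [← hiddenTarget_self β γ lamC] at hβ
  exact (hasFDerivAt_id _).sub (hβ.comp _ hT)

end

/-- The hypothesis `heig` encodes `μ < 1` for the largest eigenvalue `μ` of
`(I - J_β J_γ)ᵀ(I - J_β J_γ)` as the equivalent quadratic bound `‖v - J_β (J_γ v)‖² ≤ μ‖v‖²`. -/
theorem target_prop_guarantee {m n : ℕ}
    (β : EuclideanSpace ℝ (Fin m) → EuclideanSpace ℝ (Fin n))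
    (γ : EuclideanSpace ℝ (Fin n) → EuclideanSpace ℝ (Fin m))
    (hβ : ContDiff ℝ 1 β) (hγ : ContDiff ℝ 1 γ)
    (lamC : EuclideanSpace ℝ (Fin m))
    (Jβ : EuclideanSpace ℝ (Fin m) →L[ℝ] EuclideanSpace ℝ (Fin n))
    (Jγ : EuclideanSpace ℝ (Fin n) →L[ℝ] EuclideanSpace ℝ (Fin m))
    (hJβ : Jβ = fderiv ℝ β lamC) (hJγ : Jγ = fderiv ℝ γ (β lamC))
    (μ : ℝ) (hμ : μ < 1)
    (heig : ∀ v : EuclideanSpace ℝ (Fin n), ‖v - Jβ (Jγ v)‖ ^ 2 ≤ μ * ‖v‖ ^ 2) :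
    ∃ δ > 0, ∀ lamU : EuclideanSpace ℝ (Fin n), ‖lamU - β lamC‖ < δ →
      ‖lamU - β (lamC + γ lamU - γ (β lamC))‖ ^ 2 ≤ ‖lamU - β lamC‖ ^ 2 := by
  have hDβ : HasFDerivAt β Jβ lamC := hJβ ▸ (hβ.differentiable one_ne_zero lamC).hasFDerivAt
  have hDγ : HasFDerivAt γ Jγ (β lamC) :=
    hJγ ▸ (hγ.differentiable one_ne_zero (β lamC)).hasFDerivAt
  have hnorm : ‖ContinuousLinearMap.id ℝ _ - Jβ.comp Jγ‖ < 1 :=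
    (ContinuousLinearMap.opNorm_le_sqrt_of_sq_le heig).trans_lt ((Real.sqrt_lt' one_pos).2 (by simpa using hμ))
  obtain ⟨δ, hδ, hball⟩ := Metric.eventually_nhds_iff.1
    ((hasFDerivAt_sub_comp_hiddenTarget hDβ hDγ).eventually_norm_sub_le_mul hnorm)
  refine ⟨δ, hδ, fun lamU hlamU => ?_⟩
  have hle := hball (by rwa [dist_eq_norm])
  rw [hiddenTarget_self, sub_self, sub_zero, one_mul] at hle
  exact pow_le_pow_left₀ (norm_nonneg _) hle 2
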